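/- Let X, P be square-integrable with E[X - P] = 0 and Cov(X - P, W) = 0 for all square-integrable W measurable with respect to a sub-σ-algebra F. Let G be an F-measurable square-integrable random vector with invertible covariance, and let E_G[X] be the Bayes linear rule of X given G. Then E[(P - E_G[X])^2] ≤ E[(P - W)^2] for any component W of G (or affine combination of components of G). In particular the posterior belief assessment E_G[X] is at least as close to the prevision P as any single alternative Bayesian conditional expectation included in G. -/

import Mathlib

open MeasureTheory Filter

noncomputable def mean {Ω : Type*} [MeasurableSpace Ω] (μ : Measure Ω) (X : Ω → ℝ) : ℝ :=
  ∫ ω, X ω ∂μ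

noncomputable def cov {Ω : Type*} [MeasurableSpace Ω] (μ : Measure Ω) (X Y : Ω → ℝ) : ℝ :=
  ∫ ω, (X ω - mean μ X) * (Y ω - mean μ Y) ∂μ

noncomputable def var {Ω : Type*} [MeasurableSpace Ω] (μ : Measure Ω) (X : Ω → ℝ) : ℝ :=
  cov μ X X

noncomputable def covMat {Ω : Type*} [MeasurableSpace Ω] (μ : Measure Ω) {m : ℕ}
    (G : Fin m → Ω → ℝ) : Matrix (Fin m) (Fin m) ℝ :=
  Matrix.of fun i j => cov μ (G i) (G j)

/-- Bayes linear rule: `E[X] + Cov(X,G) Var(G)⁻¹ (G - E[G])`. -/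
noncomputable def blRule {Ω : Type*} [MeasurableSpace Ω] (μ : Measure Ω) {m : ℕ}
    (X : Ω → ℝ) (G : Fin m → Ω → ℝ) : Ω → ℝ :=
  fun ω => mean μ X +
    ∑ i, ∑ j, cov μ X (G i) * (covMat μ G)⁻¹ i j * (G j ω - mean μ (G j))

/-! The hypotheses force `E[P] = E[X]` and `Cov(P, Gᵢ) = Cov(X, Gᵢ)` for every `i`, and the Bayes
linear rule sees `X` only through these moments, so `E_G[X] = E_G[P]`. What remains is the classical
fact that `E_G[P]` is the best affine predictor of `P` from `G`: the residual `P - E_G[P]` has mean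
zero and is uncorrelated with each `Gᵢ`, hence with `E_G[P] - W` for every affine combination `W`
of the `Gᵢ`, and Pythagoras gives `E[(P - W)²] ≥ E[(P - E_G[P])²]`. -/

open ProbabilityTheory Matrix

section

variable {Ω : Type*} [MeasurableSpace Ω] {μ : Measure Ω}

lemma cov_eq_covariance (X Y : Ω → ℝ) : cov μ X Y = cov[X, Y; μ] := rfl

noncomputable def blCoeff (μ : Measure Ω) {m : ℕ} (X : Ω → ℝ) (G : Fin m → Ω → ℝ) :
    Fin m → ℝ :=
  (fun i => cov μ X (G i)) ᵥ* (covMat μ G)⁻¹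

lemma blRule_eq_affineComb {m : ℕ} (X : Ω → ℝ) (G : Fin m → Ω → ℝ) :
    blRule μ X G = fun ω => (mean μ X - ∑ j, blCoeff μ X G j * mean μ (G j)) +
      ∑ j, blCoeff μ X G j * G j ω := by
  ext ω
  simp only [blRule, blCoeff, vecMul, dotProduct]
  rw [Finset.sum_comm]
  simp only [← Finset.sum_mul, mul_sub, Finset.sum_sub_distrib]
  ring

lemma blCoeff_vecMul_covMat {m : ℕ} (X : Ω → ℝ) {G : Fin m → Ω → ℝ}
    (hinv : IsUnit (covMat μ G).det) :
    blCoeff μ X G ᵥ* covMat μ G = fun i => cov μ X (G i) := by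
  rw [blCoeff, vecMul_vecMul, nonsing_inv_mul _ hinv, vecMul_one]

lemma blRule_congr {m : ℕ} {X Y : Ω → ℝ} {G : Fin m → Ω → ℝ} (hmean : mean μ X = mean μ Y)
    (hcov : ∀ i, cov μ X (G i) = cov μ Y (G i)) :
    blRule μ X G = blRule μ Y G := by
  ext ω
  simp only [blRule, hmean, hcov]

variable [IsProbabilityMeasure μ]

lemma integral_sq_le_integral_add_sq {R S : Ω → ℝ} (hR : MemLp R 2 μ) (hS : MemLp S 2 μ)
    (hR₀ : μ[R] = 0) (hRS : cov[R, S; μ] = 0) :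
    ∫ ω, R ω ^ 2 ∂μ ≤ ∫ ω, (R ω + S ω) ^ 2 ∂μ :=
  calc ∫ ω, R ω ^ 2 ∂μ
      = Var[R; μ] := (variance_of_integral_eq_zero hR.aemeasurable hR₀).symm
    _ ≤ Var[R; μ] + Var[S; μ] := le_add_of_nonneg_right (variance_nonneg _ _)
    _ = Var[R + S; μ] := by rw [variance_add hR hS, hRS]; ring
    _ ≤ μ[(R + S) ^ 2] := variance_le_expectation_sq (hR.add hS).aestronglyMeasurable
    _ = ∫ ω, (R ω + S ω) ^ 2 ∂μ := rfl

variable {ι : Type*} [Fintype ι] {G : ι → Ω → ℝ}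

lemma memLp_affineComb (hG : ∀ i, MemLp (G i) 2 μ) (c₀ : ℝ) (c : ι → ℝ) :
    MemLp (fun ω => c₀ + ∑ i, c i * G i ω) 2 μ :=
  (memLp_const c₀).add (memLp_finsetSum _ fun i _ => (hG i).const_mul (c i))

lemma integral_affineComb (hG : ∀ i, Integrable (G i) μ) (c₀ : ℝ) (c : ι → ℝ) :
    ∫ ω, (c₀ + ∑ i, c i * G i ω) ∂μ = c₀ + ∑ i, c i * μ[G i] := by
  rw [integral_add (integrable_const _) (integrable_finsetSum _ fun i _ => (hG i).const_mul _),
    integral_finsetSum _ fun i _ => (hG i).const_mul _]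
  simp [integral_const_mul]

lemma covariance_affineComb_left (hG : ∀ i, MemLp (G i) 2 μ) {Y : Ω → ℝ} (hY : MemLp Y 2 μ)
    (c₀ : ℝ) (c : ι → ℝ) :
    cov[fun ω => c₀ + ∑ i, c i * G i ω, Y; μ] = ∑ i, c i * cov[G i, Y; μ] := by
  have hsum : Integrable (fun ω => ∑ i, c i * G i ω) μ :=
    integrable_finsetSum _ fun i _ => ((hG i).integrable one_le_two).const_mul (c i)
  rw [covariance_const_add_left hsum, covariance_fun_sum_left (fun i => (hG i).const_mul (c i)) hY]
  simp [covariance_const_mul_left]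

lemma integral_sq_le_integral_add_affineComb_sq {R : Ω → ℝ} (hR : MemLp R 2 μ)
    (hG : ∀ i, MemLp (G i) 2 μ) (hR₀ : μ[R] = 0) (hRG : ∀ i, cov[G i, R; μ] = 0)
    (c₀ : ℝ) (c : ι → ℝ) :
    ∫ ω, R ω ^ 2 ∂μ ≤ ∫ ω, (R ω + (c₀ + ∑ i, c i * G i ω)) ^ 2 ∂μ := by
  refine integral_sq_le_integral_add_sq hR (memLp_affineComb hG c₀ c) hR₀ ?_
  rw [covariance_comm, covariance_affineComb_left hG hR]
  simp [hRG]

variable {m : ℕ} {G : Fin m → Ω → ℝ}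

lemma memLp_blRule (hG : ∀ i, MemLp (G i) 2 μ) (X : Ω → ℝ) : MemLp (blRule μ X G) 2 μ := by
  rw [blRule_eq_affineComb]
  exact memLp_affineComb hG _ _

lemma integral_blRule (hG : ∀ i, Integrable (G i) μ) (X : Ω → ℝ) :
    μ[blRule μ X G] = mean μ X := by
  rw [blRule_eq_affineComb, integral_affineComb hG]
  exact sub_add_cancel _ _

lemma covariance_blRule_left (hG : ∀ i, MemLp (G i) 2 μ) (hinv : IsUnit (covMat μ G).det)
    (X : Ω → ℝ) (k : Fin m) :
    cov[blRule μ X G, G k; μ] = cov μ X (G k) := by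
  rw [blRule_eq_affineComb, covariance_affineComb_left hG (hG k)]
  simpa [vecMul, dotProduct, covMat, cov_eq_covariance] using
    congrFun (blCoeff_vecMul_covMat X hinv) k

theorem integral_sq_sub_blRule_le {Y : Ω → ℝ} (hY : MemLp Y 2 μ) (hG : ∀ i, MemLp (G i) 2 μ)
    (hinv : IsUnit (covMat μ G).det) (a₀ : ℝ) (a : Fin m → ℝ) :
    ∫ ω, (Y ω - blRule μ Y G ω) ^ 2 ∂μ ≤ ∫ ω, (Y ω - (a₀ + ∑ i, a i * G i ω)) ^ 2 ∂μ := by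
  have hbl := memLp_blRule hG Y
  have hR : MemLp (fun ω => Y ω - blRule μ Y G ω) 2 μ := hY.sub hbl
  have hR₀ : μ[fun ω => Y ω - blRule μ Y G ω] = 0 := by
    rw [integral_sub (hY.integrable one_le_two) (hbl.integrable one_le_two),
      integral_blRule fun i => (hG i).integrable one_le_two]
    exact sub_self _
  have hRG : ∀ k, cov[G k, fun ω => Y ω - blRule μ Y G ω; μ] = 0 := fun k => by
    rw [covariance_comm, covariance_fun_sub_left hY hbl (hG k),
      covariance_blRule_left hG hinv]
    exact sub_self _
  calc ∫ ω, (Y ω - blRule μ Y G ω) ^ 2 ∂μ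
      ≤ ∫ ω, (Y ω - blRule μ Y G ω +
          ((mean μ Y - ∑ j, blCoeff μ Y G j * mean μ (G j) - a₀) +
            ∑ i, (blCoeff μ Y G i - a i) * G i ω)) ^ 2 ∂μ :=
        integral_sq_le_integral_add_affineComb_sq hR hG hR₀ hRG _ _
    _ = ∫ ω, (Y ω - (a₀ + ∑ i, a i * G i ω)) ^ 2 ∂μ := by
        congr 1 with ω
        simp only [blRule_eq_affineComb, sub_mul, Finset.sum_sub_distrib]
        ring

end

theorem stmt9_general {Ω : Type*} (F : MeasurableSpace Ω) {m0 : MeasurableSpace Ω}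
    (μ : Measure Ω) [IsProbabilityMeasure μ]
    {m : ℕ} (X P : Ω → ℝ) (G : Fin m → Ω → ℝ)
    (hX : MemLp X 2 μ) (hP : MemLp P 2 μ) (hG : ∀ i, MemLp (G i) 2 μ)
    (hGmeas : ∀ i, Measurable[F] (G i))
    (hinv : IsUnit (covMat μ G).det)
    (hmean : mean μ (fun ω => X ω - P ω) = 0)
    (horth : ∀ W : Ω → ℝ, MemLp W 2 μ → Measurable[F] W →
      cov μ (fun ω => X ω - P ω) W = 0) :
    ∀ (a0 : ℝ) (a : Fin m → ℝ),
      ∫ ω, (P ω - blRule μ X G ω) ^ 2 ∂μ ≤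
        ∫ ω, (P ω - (a0 + ∑ i, a i * G i ω)) ^ 2 ∂μ := by
  intro a0 a
  have hmeanXP : mean μ X = mean μ P := by
    rwa [mean, integral_sub (hX.integrable one_le_two) (hP.integrable one_le_two),
      sub_eq_zero] at hmean
  have hcovXP : ∀ i, cov μ X (G i) = cov μ P (G i) := fun i => by
    have h := horth (G i) (hG i) (hGmeas i)
    rwa [cov_eq_covariance, covariance_fun_sub_left hX hP (hG i), sub_eq_zero] at h
  rw [blRule_congr hmeanXP hcovXP]
  exact integral_sq_sub_blRule_le hP hG hinv a0 a

theorem stmt9 {Ω : Type*} (F : MeasurableSpace Ω) {m0 : MeasurableSpace Ω}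
    (μ : Measure Ω) [IsProbabilityMeasure μ] (hF : F ≤ m0)
    {m : ℕ} (X P : Ω → ℝ) (G : Fin m → Ω → ℝ)
    (hX : MemLp X 2 μ) (hP : MemLp P 2 μ) (hG : ∀ i, MemLp (G i) 2 μ)
    (hGmeas : ∀ i, Measurable[F] (G i))
    (hinv : IsUnit (covMat μ G).det)
    (hmean : mean μ (fun ω => X ω - P ω) = 0)
    (horth : ∀ W : Ω → ℝ, MemLp W 2 μ → Measurable[F] W →
      cov μ (fun ω => X ω - P ω) W = 0) :
    ∀ (a0 : ℝ) (a : Fin m → ℝ),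
      ∫ ω, (P ω - blRule μ X G ω) ^ 2 ∂μ ≤
        ∫ ω, (P ω - (a0 + ∑ i, a i * G i ω)) ^ 2 ∂μ :=
  stmt9_general F (m0 := m0) μ X P G hX hP hG hGmeas hinv hmean horth
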